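/- Support shrinkage for PGD: choose z⁽⁰⁾ with ‖x − D z⁽⁰⁾‖₂ ≤ 1 and set S = supp(z⁽⁰⁾). If τ > 1 and s > max{2|S|, 2(1+λ|S|)/(λτ)}, then the PGD sequence satisfies supp(z⁽ᵗ⁾) ⊆ supp(z⁽ᵗ⁻¹⁾) for every t ≥ 1; in particular supp(z⁽ᵗ⁾) ⊆ S for all t ≥ 0. -/

import Mathlib

/-!
Hard thresholding at level `θ = √(2λ/c)` is the exact proximal map of `λ‖·‖₀` for the quadratic
`(c/2)‖· - u‖²`, with `c = τs`. On vectors supported in a set `S` with unit-norm columns,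
`‖Dδ‖² ≤ |S|‖δ‖² ≤ (c/2)‖δ‖²`, so as long as the support does not grow, the PGD step minimises a
majorant of `L` and `L` cannot increase. The support cannot grow as long as `2‖x - Dz‖² < λc`: a
zero coordinate is moved by `(2/c)|(Dᵀ(Dz - x))_j| ≤ (2/c)‖x - Dz‖`, which is then below `θ`.
Both conditions propagate by induction from `‖x - Dz⁽⁰⁾‖² + λ|S| ≤ 1 + λ|S| < λτs/2`.
-/

open scoped BigOperators

noncomputable def l2norm {m : ℕ} (v : Fin m → ℝ) : ℝ := Real.sqrt (∑ i, (v i)^2)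

noncomputable def supp {n : ℕ} (z : Fin n → ℝ) : Finset (Fin n) := Finset.univ.filter (fun j => z j ≠ 0)

noncomputable def l0norm {n : ℕ} (z : Fin n → ℝ) : ℕ := (supp z).card

noncomputable def hardThresh {n : ℕ} (θ : ℝ) (u : Fin n → ℝ) : Fin n → ℝ :=
  fun j => if |u j| < θ then 0 else u j

noncomputable def Lobj {d n : ℕ} (D : Matrix (Fin d) (Fin n) ℝ) (x : Fin d → ℝ) (lam : ℝ)
    (z : Fin n → ℝ) : ℝ := (l2norm (x - D.mulVec z))^2 + lam * (l0norm z : ℝ)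

noncomputable def pgdSeq {d n : ℕ} (D : Matrix (Fin d) (Fin n) ℝ) (x : Fin d → ℝ)
    (lam τ s : ℝ) (z0 : Fin n → ℝ) : ℕ → (Fin n → ℝ)
  | 0 => z0
  | (t+1) =>
      hardThresh (Real.sqrt (2*lam/(τ*s)))
        (fun j => pgdSeq D x lam τ s z0 t j
          - (2/(τ*s)) * (D.transpose.mulVec (D.mulVec (pgdSeq D x lam τ s z0 t) - x)) j)

noncomputable def sigmaMinCols {d n : ℕ} (D : Matrix (Fin d) (Fin n) ℝ) (S : Finset (Fin n)) : ℝ :=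
  sInf {t | ∃ y : Fin n → ℝ, (∀ j ∉ S, y j = 0) ∧ l2norm y = 1 ∧ t = l2norm (D.mulVec y)}

noncomputable def sigmaMaxCols {d n : ℕ} (D : Matrix (Fin d) (Fin n) ℝ) (S : Finset (Fin n)) : ℝ :=
  sSup {t | ∃ y : Fin n → ℝ, (∀ j ∉ S, y j = 0) ∧ l2norm y = 1 ∧ t = l2norm (D.mulVec y)}

noncomputable def sigmaMax {d n : ℕ} (D : Matrix (Fin d) (Fin n) ℝ) : ℝ :=
  sSup {t | ∃ y : Fin n → ℝ, l2norm y = 1 ∧ t = l2norm (D.mulVec y)}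

def admissibleSubgrad {n : ℕ} (lam b : ℝ) (z r : Fin n → ℝ) : Prop :=
  (∀ j, z j ≠ 0 → r j = 0) ∧ (∀ j, z j = 0 → -(lam/b) ≤ r j ∧ r j ≤ lam/b)

noncomputable def frobNorm {a b : ℕ} (M : Matrix (Fin a) (Fin b) ℝ) : ℝ :=
  Real.sqrt (∑ i, ∑ j, (M i j)^2)

open Matrix

lemma l2norm_sq {m : ℕ} (v : Fin m → ℝ) : l2norm v ^ 2 = v ⬝ᵥ v := by
  rw [l2norm, Real.sq_sqrt (by positivity)]
  simp only [dotProduct, sq]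

@[simp]
lemma mem_supp {n : ℕ} {z : Fin n → ℝ} {j : Fin n} : j ∈ supp z ↔ z j ≠ 0 := by
  simp [supp]

lemma sum_ite_ne_zero_eq_mul_card_supp {n : ℕ} (lam : ℝ) (w : Fin n → ℝ) :
    ∑ j, (if w j ≠ 0 then lam else 0) = lam * (supp w).card := by
  rw [← Finset.sum_filter, Finset.sum_const, nsmul_eq_mul, mul_comm, supp]

lemma hardThresh_apply_prox_le {n : ℕ} {θ a lam : ℝ} (hθ : 0 ≤ θ) (ha : 0 ≤ a) (hlam : a * θ ^ 2 = lam)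
    (u : Fin n → ℝ) (j : Fin n) (w : ℝ) :
    a * (hardThresh θ u j - u j) ^ 2 + (if hardThresh θ u j ≠ 0 then lam else 0)
      ≤ a * (w - u j) ^ 2 + (if w ≠ 0 then lam else 0) := by
  have hlam0 : 0 ≤ lam := hlam ▸ by positivity
  simp only [hardThresh]
  by_cases hu : |u j| < θ
  · have hsq : u j ^ 2 ≤ θ ^ 2 := by nlinarith [sq_abs (u j), abs_nonneg (u j)]
    simp only [if_pos hu, ne_eq, not_true_eq_false, if_false, add_zero, zero_sub, neg_sq]
    by_cases hw : w = 0
    · simp [hw]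
    · rw [if_pos hw]
      nlinarith [mul_le_mul_of_nonneg_left hsq ha, sq_nonneg (w - u j)]
  · have hsq : θ ^ 2 ≤ u j ^ 2 := by nlinarith [sq_abs (u j), not_lt.mp hu]
    have hpen : (if u j ≠ 0 then lam else 0) ≤ lam := by split_ifs <;> linarith
    simp only [if_neg hu, sub_self, ne_eq, OfNat.ofNat_ne_zero, not_false_eq_true, zero_pow,
      mul_zero, zero_add]
    by_cases hw : w = 0
    · simp only [hw, not_true_eq_false, if_false]
      nlinarith [mul_le_mul_of_nonneg_left hsq ha]
    · rw [if_pos hw]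
      nlinarith [mul_nonneg ha (sq_nonneg (w - u j))]

lemma hardThresh_prox_le {n : ℕ} {θ a lam : ℝ} (hθ : 0 ≤ θ) (ha : 0 ≤ a)
    (hlam : a * θ ^ 2 = lam) (u w : Fin n → ℝ) :
    a * ((hardThresh θ u - u) ⬝ᵥ (hardThresh θ u - u)) + lam * (supp (hardThresh θ u)).card
      ≤ a * ((w - u) ⬝ᵥ (w - u)) + lam * (supp w).card := by
  simp only [dotProduct, ← sq, ← sum_ite_ne_zero_eq_mul_card_supp, Finset.mul_sum,
    ← Finset.sum_add_distrib, Pi.sub_apply]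
  exact Finset.sum_le_sum fun j _ => hardThresh_apply_prox_le hθ ha hlam u j (w j)

lemma sq_transpose_mulVec_apply_le {d n : ℕ} {D : Matrix (Fin d) (Fin n) ℝ} {j : Fin n}
    (hD : ∑ i, D i j ^ 2 ≤ 1) (r : Fin d → ℝ) : (Dᵀ *ᵥ r) j ^ 2 ≤ r ⬝ᵥ r := by
  calc (Dᵀ *ᵥ r) j ^ 2 = (∑ i, D i j * r i) ^ 2 := by simp [mulVec, dotProduct]
    _ ≤ (∑ i, D i j ^ 2) * ∑ i, r i ^ 2 := Finset.sum_mul_sq_le_sq_mul_sq _ _ _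
    _ ≤ 1 * ∑ i, r i ^ 2 := by gcongr
    _ = r ⬝ᵥ r := by simp [dotProduct, sq]

lemma mulVec_dotProduct_self_le {d n : ℕ} {D : Matrix (Fin d) (Fin n) ℝ}
    (hD : ∀ j, ∑ i, D i j ^ 2 ≤ 1) (v : Fin n → ℝ) :
    (D *ᵥ v) ⬝ᵥ (D *ᵥ v) ≤ (supp v).card * (v ⬝ᵥ v) := by
  have hrestrict : ∀ i, (D *ᵥ v) i = ∑ j ∈ supp v, D i j * v j := fun i => by
    rw [mulVec, dotProduct, supp, Finset.sum_filter]
    exact Finset.sum_congr rfl fun j _ => by split_ifs with h <;> simp_all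
  calc (D *ᵥ v) ⬝ᵥ (D *ᵥ v) = ∑ i, (∑ j ∈ supp v, D i j * v j) ^ 2 := by
        simp only [dotProduct, ← sq, hrestrict]
    _ ≤ ∑ i, (supp v).card * ∑ j ∈ supp v, (D i j * v j) ^ 2 :=
        Finset.sum_le_sum fun i _ => sq_sum_le_card_mul_sum_sq
    _ = (supp v).card * ∑ j ∈ supp v, (∑ i, D i j ^ 2) * v j ^ 2 := by
        simp only [← Finset.mul_sum, Finset.sum_comm (s := Finset.univ), mul_pow, Finset.sum_mul]
    _ ≤ (supp v).card * ∑ j ∈ supp v, 1 * v j ^ 2 := by gcongr with j; exact hD j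
    _ ≤ (supp v).card * (v ⬝ᵥ v) := by
        simp only [one_mul, dotProduct, ← sq]
        gcongr
        exact Finset.subset_univ _

lemma Lobj_eq {d n : ℕ} (D : Matrix (Fin d) (Fin n) ℝ) (x : Fin d → ℝ) (lam : ℝ) (z : Fin n → ℝ) :
    Lobj D x lam z = (x - D *ᵥ z) ⬝ᵥ (x - D *ᵥ z) + lam * (supp z).card := by
  rw [Lobj, l2norm_sq, l0norm]

noncomputable def pgdStep {d n : ℕ} (D : Matrix (Fin d) (Fin n) ℝ) (x : Fin d → ℝ) (lam c : ℝ)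
    (z : Fin n → ℝ) : Fin n → ℝ :=
  hardThresh (Real.sqrt (2 * lam / c)) (z - (2 / c) • (Dᵀ *ᵥ (D *ᵥ z - x)))

lemma pgdSeq_succ {d n : ℕ} (D : Matrix (Fin d) (Fin n) ℝ) (x : Fin d → ℝ) (lam τ s : ℝ)
    (z0 : Fin n → ℝ) (t : ℕ) :
    pgdSeq D x lam τ s z0 (t + 1) = pgdStep D x lam (τ * s) (pgdSeq D x lam τ s z0 t) :=
  rfl

section Step

variable {d n : ℕ} {D : Matrix (Fin d) (Fin n) ℝ} {x : Fin d → ℝ} {lam c : ℝ} {z : Fin n → ℝ}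

lemma supp_pgdStep_subset (hD : ∀ j, ∑ i, D i j ^ 2 ≤ 1) (hc : 0 < c)
    (hres : 2 * ((x - D *ᵥ z) ⬝ᵥ (x - D *ᵥ z)) < lam * c) :
    supp (pgdStep D x lam c z) ⊆ supp z := by
  intro j hj
  rw [mem_supp] at hj ⊢
  intro hz
  apply hj
  have hgrad : (Dᵀ *ᵥ (D *ᵥ z - x)) j ^ 2 ≤ (x - D *ᵥ z) ⬝ᵥ (x - D *ᵥ z) :=
    (sq_transpose_mulVec_apply_le (hD j) _).trans_eq (by rw [← neg_sub x, neg_dotProduct_neg])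
  have hsmall : |(z - (2 / c) • (Dᵀ *ᵥ (D *ᵥ z - x))) j| < Real.sqrt (2 * lam / c) := by
    rw [Real.lt_sqrt (abs_nonneg _), sq_abs, lt_div_iff₀ hc]
    simp only [Pi.sub_apply, Pi.smul_apply, smul_eq_mul, hz, zero_sub, neg_sq, mul_pow]
    field_simp
    nlinarith
  exact if_pos hsmall

lemma Lobj_pgdStep_le (hD : ∀ j, ∑ i, D i j ^ 2 ≤ 1) (hlam : 0 ≤ lam) (hc : 0 < c)
    (hcard : 2 * (supp z).card ≤ c) (hsub : supp (pgdStep D x lam c z) ⊆ supp z) :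
    Lobj D x lam (pgdStep D x lam c z) ≤ Lobj D x lam z := by
  set g := Dᵀ *ᵥ (D *ᵥ z - x)
  set u := z - (2 / c) • g
  set z' := pgdStep D x lam c z
  set δ := z' - z
  have hθ : c / 2 * Real.sqrt (2 * lam / c) ^ 2 = lam := by
    rw [Real.sq_sqrt (by positivity)]
    field_simp
  have hprox : c / 2 * ((z' - u) ⬝ᵥ (z' - u)) + lam * (supp z').card
      ≤ c / 2 * ((z - u) ⬝ᵥ (z - u)) + lam * (supp z).card :=
    hardThresh_prox_le (Real.sqrt_nonneg _) (by positivity) hθ u z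
  have hsuppδ : supp δ ⊆ supp z := fun j hj => by
    by_contra hz
    have hz' : z' j = 0 := by simpa using mt (@hsub j) hz
    simp_all [δ]
  have hδδ : 0 ≤ δ ⬝ᵥ δ := Finset.sum_nonneg fun j _ => mul_self_nonneg _
  have hDδ : (D *ᵥ δ) ⬝ᵥ (D *ᵥ δ) ≤ c / 2 * (δ ⬝ᵥ δ) :=
    (mulVec_dotProduct_self_le hD δ).trans <| by
      gcongr
      have := Finset.card_le_card hsuppδ
      have : ((supp δ).card : ℝ) ≤ (supp z).card := by exact_mod_cast this
      linarith
  have hcross : (D *ᵥ δ) ⬝ᵥ (x - D *ᵥ z) = -(δ ⬝ᵥ g) := by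
    rw [dotProduct_mulVec, vecMul_transpose, ← neg_sub (D *ᵥ z), dotProduct_neg]
  have hres : (x - D *ᵥ z') ⬝ᵥ (x - D *ᵥ z')
      = (x - D *ᵥ z) ⬝ᵥ (x - D *ᵥ z) + 2 * (δ ⬝ᵥ g) + (D *ᵥ δ) ⬝ᵥ (D *ᵥ δ) := by
    have : x - D *ᵥ z' = (x - D *ᵥ z) - D *ᵥ δ := by
      rw [mulVec_sub]; abel
    have expand (a b : Fin d → ℝ) : (a - b) ⬝ᵥ (a - b) = a ⬝ᵥ a - 2 * (b ⬝ᵥ a) + b ⬝ᵥ b := by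
      simp only [sub_dotProduct, dotProduct_sub, dotProduct_comm a b]
      ring
    rw [this, expand, hcross]
    ring
  have hproxExpand : c / 2 * ((z' - u) ⬝ᵥ (z' - u)) - c / 2 * ((z - u) ⬝ᵥ (z - u))
      = c / 2 * (δ ⬝ᵥ δ) + 2 * (δ ⬝ᵥ g) := by
    have h1 : z' - u = δ + (2 / c) • g := by simp only [δ, u]; abel
    have h2 : z - u = (2 / c) • g := by simp only [u]; abel
    rw [h1, h2]
    simp only [add_dotProduct, dotProduct_add, smul_dotProduct, dotProduct_smul, smul_eq_mul,
      dotProduct_comm g δ]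
    field_simp
    ring
  rw [Lobj_eq, Lobj_eq, hres]
  linarith

lemma supp_pgdStep_subset_and_Lobj_le (hD : ∀ j, ∑ i, D i j ^ 2 ≤ 1) (hlam : 0 ≤ lam) (hc : 0 < c)
    {S : Finset (Fin n)} {L : ℝ} (hS : 2 * S.card ≤ c) (hLc : 2 * L < lam * c)
    (hzS : supp z ⊆ S) (hzL : Lobj D x lam z ≤ L) :
    supp (pgdStep D x lam c z) ⊆ supp z ∧ Lobj D x lam (pgdStep D x lam c z) ≤ Lobj D x lam z := by
  have hres : 2 * ((x - D *ᵥ z) ⬝ᵥ (x - D *ᵥ z)) < lam * c := by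
    rw [Lobj_eq] at hzL
    have : 0 ≤ lam * (supp z).card := by positivity
    linarith
  have hcard : 2 * ((supp z).card : ℝ) ≤ c := by
    have : ((supp z).card : ℝ) ≤ S.card := by exact_mod_cast Finset.card_le_card hzS
    linarith
  have hsub := supp_pgdStep_subset hD hc hres
  exact ⟨hsub, Lobj_pgdStep_le hD hlam hc hcard hsub⟩

end Step

section Sequence

variable {d n : ℕ} {D : Matrix (Fin d) (Fin n) ℝ} {x : Fin d → ℝ} {lam τ s : ℝ} {z0 : Fin n → ℝ}

lemma supp_pgdSeq_subset_and_Lobj_le (hD : ∀ j, ∑ i, D i j ^ 2 ≤ 1) (hlam : 0 ≤ lam)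
    (hc : 0 < τ * s) (hS : 2 * (supp z0).card ≤ τ * s)
    (hL : 2 * Lobj D x lam z0 < lam * (τ * s)) (t : ℕ) :
    supp (pgdSeq D x lam τ s z0 t) ⊆ supp z0 ∧
      Lobj D x lam (pgdSeq D x lam τ s z0 t) ≤ Lobj D x lam z0 := by
  induction t with
  | zero => exact ⟨subset_rfl, le_rfl⟩
  | succ t ih =>
    obtain ⟨hsub, hdesc⟩ := supp_pgdStep_subset_and_Lobj_le hD hlam hc hS hL ih.1 ih.2
    rw [pgdSeq_succ]
    exact ⟨hsub.trans ih.1, hdesc.trans ih.2⟩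

lemma supp_pgdSeq_succ_subset (hD : ∀ j, ∑ i, D i j ^ 2 ≤ 1) (hlam : 0 ≤ lam)
    (hc : 0 < τ * s) (hS : 2 * (supp z0).card ≤ τ * s)
    (hL : 2 * Lobj D x lam z0 < lam * (τ * s)) (t : ℕ) :
    supp (pgdSeq D x lam τ s z0 (t + 1)) ⊆ supp (pgdSeq D x lam τ s z0 t) :=
  let ih := supp_pgdSeq_subset_and_Lobj_le hD hlam hc hS hL t
  (supp_pgdStep_subset_and_Lobj_le hD hlam hc hS hL ih.1 ih.2).1

end Sequence

theorem stmt1_general {d n : ℕ} (D : Matrix (Fin d) (Fin n) ℝ) (x : Fin d → ℝ)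
    (lam τ s : ℝ) (z0 : Fin n → ℝ)
    (hD : ∀ j, l2norm (fun i => D i j) ≤ 1)
    (hlam : 0 < lam) (hτ : 1 < τ)
    (hz0 : l2norm (x - D.mulVec z0) ≤ 1)
    (hs : s > max (2 * ((supp z0).card : ℝ))
                  (2 * (1 + lam * ((supp z0).card : ℝ)) / (lam * τ))) :
    (∀ t : ℕ, supp (pgdSeq D x lam τ s z0 (t+1)) ⊆ supp (pgdSeq D x lam τ s z0 t)) ∧
    (∀ t : ℕ, supp (pgdSeq D x lam τ s z0 t) ⊆ supp z0) := by
  obtain ⟨hs₁, hs₂⟩ := max_lt_iff.mp hs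
  have hD' : ∀ j, ∑ i, D i j ^ 2 ≤ 1 := fun j => Real.sqrt_le_one.mp (hD j)
  have hcard : 0 ≤ ((supp z0).card : ℝ) := Nat.cast_nonneg _
  have hτs : s < τ * s := lt_mul_left (by linarith) hτ
  have hc : 0 < τ * s := by linarith
  have hS : 2 * ((supp z0).card : ℝ) ≤ τ * s := by linarith
  have hL0 : Lobj D x lam z0 ≤ 1 + lam * (supp z0).card := by
    rw [Lobj_eq, ← l2norm_sq]
    have : l2norm (x - D *ᵥ z0) ^ 2 ≤ 1 := pow_le_one₀ (Real.sqrt_nonneg _) hz0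
    linarith
  have hL : 2 * Lobj D x lam z0 < lam * (τ * s) := by
    have := (div_lt_iff₀ (by positivity)).mp hs₂
    linarith
  exact ⟨supp_pgdSeq_succ_subset hD' hlam.le hc hS hL,
    fun t => (supp_pgdSeq_subset_and_Lobj_le hD' hlam.le hc hS hL t).1⟩

theorem stmt1 {d n : ℕ} (D : Matrix (Fin d) (Fin n) ℝ) (x : Fin d → ℝ)
    (lam τ s : ℝ) (z0 : Fin n → ℝ)
    (hx : l2norm x ≤ 1) (hD : ∀ j, l2norm (fun i => D i j) ≤ 1)
    (hlam : 0 < lam) (hτ : 1 < τ)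
    (hz0 : l2norm (x - D.mulVec z0) ≤ 1)
    (hs : s > max (2 * ((supp z0).card : ℝ))
                  (2 * (1 + lam * ((supp z0).card : ℝ)) / (lam * τ))) :
    (∀ t : ℕ, supp (pgdSeq D x lam τ s z0 (t+1)) ⊆ supp (pgdSeq D x lam τ s z0 t)) ∧
    (∀ t : ℕ, supp (pgdSeq D x lam τ s z0 t) ⊆ supp z0) :=
  stmt1_general D x lam τ s z0 hD hlam hτ hz0 hs
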